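/- Let 1 ≤ p < ∞, let E and F be Banach lattices, let n ≥ 1, and let P, Q : E → F be positive n-homogeneous polynomials with P ≤ Q (that is, Q − P is positive). If Q is solid p-compact, then P is solid p-compact. -/

import Mathlib

/-!
For `‖x‖ ≤ 1` also `‖|x|‖ ≤ 1`, and positivity of `P` and of `Q - P` gives
`|P x| ≤ P |x| ≤ Q |x| = |Q |x||`. So `P x` lies in every solid set containing `Q |x|`,
in particular in `sol(p-conv{(y_j)})` for the sequence `(y_j)` witnessing that `Q` is solid
`p`-compact.
-/

open Filter Topology Metric

section Defs

variable {E F : Type*} [NormedAddCommGroup E] [Lattice E] [HasSolidNorm E] [IsOrderedAddMonoid E] [NormedSpace ℝ E]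
  [NormedAddCommGroup F] [Lattice F] [HasSolidNorm F] [IsOrderedAddMonoid F] [NormedSpace ℝ F]

/-- `P : E → F` is a continuous `n`-homogeneous polynomial: `P x = T(x,…,x)` for a
symmetric continuous `n`-linear map `T`. -/
def IsHomogPoly (n : ℕ) (P : E → F) : Prop :=
  ∃ T : ContinuousMultilinearMap ℝ (fun _ : Fin n => E) F,
    (∀ (v : Fin n → E) (σ : Equiv.Perm (Fin n)), T (v ∘ σ) = T v) ∧
    ∀ x : E, P x = T (fun _ => x)

/-- `P` is a positive `n`-homogeneous polynomial: its (symmetric) generating multilinear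
map takes nonnegative values on nonnegative arguments. -/
def IsPosPoly (n : ℕ) (P : E → F) : Prop :=
  ∃ T : ContinuousMultilinearMap ℝ (fun _ : Fin n => E) F,
    (∀ (v : Fin n → E) (σ : Equiv.Perm (Fin n)), T (v ∘ σ) = T v) ∧
    (∀ v : Fin n → E, (∀ i, 0 ≤ v i) → 0 ≤ T v) ∧
    ∀ x : E, P x = T (fun _ => x)

/-- `P` is regular: a difference of two positive `n`-homogeneous polynomials. -/
def IsRegPoly (n : ℕ) (P : E → F) : Prop :=
  ∃ P₁ P₂ : E → F, IsPosPoly n P₁ ∧ IsPosPoly n P₂ ∧ P = P₁ - P₂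

/-- The sup norm `‖P‖ = sup {‖P x‖ : ‖x‖ ≤ 1}`. -/
noncomputable def polySupNorm (P : E → F) : ℝ :=
  sSup {r : ℝ | ∃ x : E, ‖x‖ ≤ 1 ∧ r = ‖P x‖}

/-- The regular norm `‖P‖_r = inf {‖Q‖ : Q positive, Q - P and Q + P positive}`. -/
noncomputable def polyRegNorm (n : ℕ) (P : E → F) : ℝ :=
  sInf {r : ℝ | ∃ Q : E → F, IsPosPoly n Q ∧ IsPosPoly n (Q - P) ∧
    IsPosPoly n (Q + P) ∧ r = polySupNorm Q}

/-- Dedekind completeness: every nonempty subset bounded above has a least upper bound. -/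
def DedekindComplete (G : Type*) [Preorder G] : Prop :=
  ∀ S : Set G, S.Nonempty → BddAbove S → ∃ b, IsLUB S b

/-- The conjugate exponent `p* = p / (p - 1)`. -/
noncomputable def conjExpo (p : ℝ) : ℝ := p / (p - 1)

/-- `(λ_j)` lies in the closed unit ball of `ℓ_{p*}` (`ℓ_∞` when `p = 1`). -/
def PConvCoef (p : ℝ) (lam : ℕ → ℝ) : Prop :=
  if p = 1 then ∀ j, |lam j| ≤ 1
  else Summable (fun j => |lam j| ^ conjExpo p) ∧ (∑' j, |lam j| ^ conjExpo p) ≤ 1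

/-- `p`-convex hull `p-conv{(y_j)} = {∑_j λ_j y_j : (λ_j) ∈ B_{ℓ_{p*}}}`. -/
def pConvSet (p : ℝ) (y : ℕ → F) : Set F :=
  {z : F | ∃ lam : ℕ → ℝ, PConvCoef p lam ∧
    Tendsto (fun m => ∑ j ∈ Finset.range m, lam j • y j) atTop (nhds z)}

/-- The solid hull of a set. -/
def solidHullSet (S : Set F) : Set F := {y : F | ∃ z ∈ S, |y| ≤ |z|}

/-- `(y_j) ∈ ℓ_p(F)`. -/
def MemLpSeq (p : ℝ) (y : ℕ → F) : Prop := Summable (fun j => ‖y j‖ ^ p)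

/-- `‖(y_j)‖_p = (∑_j ‖y_j‖^p)^{1/p}`. -/
noncomputable def lpSeqNorm (p : ℝ) (y : ℕ → F) : ℝ := (∑' j, ‖y j‖ ^ p) ^ (1 / p)

/-- `P` is solid `p`-compact: `P(B_E) ⊆ sol(p-conv{(y_j)})` for some `(y_j) ∈ ℓ_p(F)`. -/
def IsSolidPCompact (p : ℝ) (n : ℕ) (P : E → F) : Prop :=
  IsHomogPoly n P ∧ ∃ y : ℕ → F, MemLpSeq p y ∧
    P '' closedBall (0 : E) 1 ⊆ solidHullSet (pConvSet p y)

/-- `‖P‖_{|K_p|} = inf {‖(y_j)‖_p : P(B_E) ⊆ sol(p-conv{(y_j)})}`. -/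
noncomputable def solidPNorm (p : ℝ) (P : E → F) : ℝ :=
  sInf {r : ℝ | ∃ y : ℕ → F, MemLpSeq p y ∧
    P '' closedBall (0 : E) 1 ⊆ solidHullSet (pConvSet p y) ∧ r = lpSeqNorm p y}

/-- `P` is `p`-compact: `P(B_E) ⊆ p-conv{(y_j)}` for some `(y_j) ∈ ℓ_p(F)`. -/
def IsPCompactPoly (p : ℝ) (n : ℕ) (P : E → F) : Prop :=
  IsHomogPoly n P ∧ ∃ y : ℕ → F, MemLpSeq p y ∧
    P '' closedBall (0 : E) 1 ⊆ pConvSet p y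

/-- `‖P‖_{K_p} = inf {‖(y_j)‖_p : P(B_E) ⊆ p-conv{(y_j)}}`. -/
noncomputable def pCompactNorm (p : ℝ) (P : E → F) : ℝ :=
  sInf {r : ℝ | ∃ y : ℕ → F, MemLpSeq p y ∧
    P '' closedBall (0 : E) 1 ⊆ pConvSet p y ∧ r = lpSeqNorm p y}

end Defs

namespace MultilinearMap

variable {ι E F : Type*} [Fintype ι]
  [AddCommGroup E] [Lattice E] [IsOrderedAddMonoid E] [Module ℝ E]
  [AddCommGroup F] [Lattice F] [IsOrderedAddMonoid F] [Module ℝ F]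

/- Expanding `v = v⁺ - v⁻` and `|v| = v⁺ + v⁻` multilinearly, the terms of the two expansions
agree up to the sign `(-1) ^ #sᶜ`, and those of the second one are nonnegative. -/
theorem abs_apply_le_apply_abs (T : MultilinearMap ℝ (fun _ : ι => E) F)
    (hT : ∀ v, (∀ i, 0 ≤ v i) → 0 ≤ T v) (v : ι → E) : |T v| ≤ T fun i => |v i| := by
  classical
  set a : ι → E := fun i => (v i)⁺
  set b : ι → E := fun i => (v i)⁻
  have hv : v = a + -b := funext fun i => by simp [a, b, ← sub_eq_add_neg]
  have habs : (fun i => |v i|) = a + b := funext fun i => (posPart_add_negPart (v i)).symm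
  have hterm (s : Finset ι) : |T (s.piecewise a (-b))| = T (s.piecewise a b) := by
    have hsign : T (s.piecewise a (-b)) = (∏ _i ∈ sᶜ, (-1 : ℝ)) • T (s.piecewise a b) := by
      rw [← map_piecewise_smul]
      congr 1
      funext i
      by_cases hi : i ∈ s <;> simp [hi]
    have hnonneg : 0 ≤ T (s.piecewise a b) :=
      hT _ fun i => by by_cases hi : i ∈ s <;> simp [hi, a, b, posPart_nonneg, negPart_nonneg]
    rw [hsign, Finset.prod_const]
    rcases neg_one_pow_eq_or ℝ (sᶜ).card with h | h <;> simp [h, abs_of_nonneg hnonneg]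
  calc |T v| = |∑ s : Finset ι, T (s.piecewise a (-b))| := by rw [← map_add_univ, ← hv]
    _ ≤ ∑ s : Finset ι, |T (s.piecewise a (-b))| :=
      Finset.le_sum_of_subadditive _ abs_zero.le abs_add_le _ _
    _ = ∑ s : Finset ι, T (s.piecewise a b) := Finset.sum_congr rfl fun s _ => hterm s
    _ = T fun i => |v i| := by rw [habs, map_add_univ]

end MultilinearMap

theorem mem_solidHullSet_of_abs_le {F : Type*} [NormedAddCommGroup F] [Lattice F] {S : Set F}
    {y z : F} (hz : z ∈ solidHullSet S) (hyz : |y| ≤ |z|) : y ∈ solidHullSet S :=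
  let ⟨w, hw, hzw⟩ := hz
  ⟨w, hw, hyz.trans hzw⟩

section

variable {E F : Type*} [NormedAddCommGroup E] [Lattice E] [NormedSpace ℝ E]
  [NormedAddCommGroup F] [Lattice F] [NormedSpace ℝ F] {n : ℕ} {P Q : E → F}

theorem IsPosPoly.isHomogPoly (hP : IsPosPoly n P) : IsHomogPoly n P :=
  let ⟨T, hsymm, _, hT⟩ := hP
  ⟨T, hsymm, hT⟩

theorem IsPosPoly.apply_nonneg (hP : IsPosPoly n P) {x : E} (hx : 0 ≤ x) : 0 ≤ P x := by
  obtain ⟨T, -, hpos, hT⟩ := hP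
  exact hT x ▸ hpos _ fun _ => hx

theorem IsPosPoly.abs_apply_le_apply_abs [IsOrderedAddMonoid E] [IsOrderedAddMonoid F]
    (hP : IsPosPoly n P) (x : E) : |P x| ≤ P |x| := by
  obtain ⟨T, -, hpos, hT⟩ := hP
  rw [hT, hT]
  exact T.toMultilinearMap.abs_apply_le_apply_abs hpos _

theorem IsPosPoly.abs_apply_le_abs_apply_abs [IsOrderedAddMonoid E] [IsOrderedAddMonoid F]
    (hP : IsPosPoly n P) (hQP : IsPosPoly n (Q - P)) (x : E) : |P x| ≤ |Q (|x|)| := by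
  have hle : P |x| ≤ Q |x| := sub_nonneg.mp (hQP.apply_nonneg (abs_nonneg x))
  have hP_le : |P x| ≤ Q |x| := (hP.abs_apply_le_apply_abs x).trans hle
  rwa [abs_of_nonneg ((abs_nonneg _).trans hP_le)]

end

theorem statement8_general {E F : Type*} [NormedAddCommGroup E] [Lattice E] [HasSolidNorm E] [IsOrderedAddMonoid E] [NormedSpace ℝ E]
    [NormedAddCommGroup F] [Lattice F] [IsOrderedAddMonoid F] [NormedSpace ℝ F]
    (p : ℝ) (n : ℕ)
    (P Q : E → F) (hPpos : IsPosPoly n P)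
    (hPQ : IsPosPoly n (Q - P)) (hQ : IsSolidPCompact p n Q) :
    IsSolidPCompact p n P := by
  obtain ⟨-, y, hy, hQy⟩ := hQ
  refine ⟨hPpos.isHomogPoly, y, hy, ?_⟩
  rintro _ ⟨x, hx, rfl⟩
  have hx_abs : |x| ∈ closedBall (0 : E) 1 := by
    simpa only [mem_closedBall_zero_iff, norm_abs_eq_norm] using hx
  exact mem_solidHullSet_of_abs_le (hQy ⟨|x|, hx_abs, rfl⟩)
    (hPpos.abs_apply_le_abs_apply_abs hPQ x)

theorem statement8 {E F : Type*} [NormedAddCommGroup E] [Lattice E] [HasSolidNorm E] [IsOrderedAddMonoid E] [NormedSpace ℝ E] [CompleteSpace E]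
    [NormedAddCommGroup F] [Lattice F] [HasSolidNorm F] [IsOrderedAddMonoid F] [NormedSpace ℝ F] [CompleteSpace F]
    (p : ℝ) (hp : 1 ≤ p) (n : ℕ) (hn : 1 ≤ n)
    (P Q : E → F) (hPpos : IsPosPoly n P) (hQpos : IsPosPoly n Q)
    (hPQ : IsPosPoly n (Q - P)) (hQ : IsSolidPCompact p n Q) :
    IsSolidPCompact p n P :=
  statement8_general p n P Q hPpos hPQ hQ
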